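/- Consider the first mass of the two-mass mass–spring chain under a quasi-periodic intervention on the second mass. Let m1, b1 : ℝ with 0 < m1, 0 < b1, let k0, k1 : ℝ with 0 < k0, 0 < k1, let l0, l1 : ℝ, and let A, ω, φ : ℕ → ℝ with Summable (fun j => |A j|). Let ζ2 : ℝ → ℝ, ζ2 t = ∑' j, A j * Real.cos (ω j * t + φ j), be the intervened trajectory of the second mass, and suppose X : ℝ → ℝ is twice differentiable and satisfies m1 * deriv (deriv X) t + b1 * deriv X t + (k0 + k1) * X t = k1 * ζ2 t + k0 * l0 - k1 * l1 for all t : ℝ. Writing D j := (k0 + k1 - m1 * (ω j)^2)^2 + b1^2 * (ω j)^2, we have Filter.Tendsto (fun t => X t - (k0 * l0 - k1 * l1) / (k0 + k1) - ∑' j, (k1 * A j / D j) * ((k0 + k1 - m1 * (ω j)^2) * Real.cos (ω j * t + φ j) + b1 * (ω j) * Real.sin (ω j * t + φ j))) Filter.atTop (nhds 0): every solution converges, independently of initial conditions, to the quasi-periodic trajectory given by the structural equation F1 of the derived Dynamic SCM. -/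

import Mathlib

/-!
Subtracting the equilibrium `(k0 l0 - k1 l1) / (k0 + k1)` and the series of the modes' periodic
responses from `X` leaves a solution of the unforced equation `m ÿ + b ẏ + K y = 0`, which
decays exponentially since `m (ẏ + ε y)² + μ y²` is a Lyapunov function for suitable small
`ε > 0`. The series may be differentiated termwise twice: `|p(iω)|² = (K - m ω²)² + b² ω²`
never vanishes and grows like `ω⁴`, so the `j`-th response and its first two derivatives are
bounded by a constant multiple of `|A j|`.
-/

open Filter Real

/-- `X` solves the damped oscillator equation `m ẍ + b ẋ + k x = g` with forcing `g`:
`X` is twice differentiable and the equation holds at every time `t`. -/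
def SolvesDampedOsc (m b k : ℝ) (g : ℝ → ℝ) (X : ℝ → ℝ) : Prop :=
  Differentiable ℝ X ∧ Differentiable ℝ (deriv X) ∧
    ∀ t : ℝ, m * deriv (deriv X) t + b * deriv X t + k * X t = g t

open Topology

theorem le_mul_exp_of_hasDerivAt_le_mul {V V' : ℝ → ℝ} {c t : ℝ}
    (hV : ∀ s, HasDerivAt V (V' s) s) (hle : ∀ s, V' s ≤ c * V s) (ht : 0 ≤ t) :
    V t ≤ V 0 * exp (c * t) := by
  have h := le_gronwallBound_of_liminf_deriv_right_le (ε := 0) (a := 0) (b := t)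
    (fun s _ => (hV s).continuousAt.continuousWithinAt)
    (fun s _ _ hr => (hV s).hasDerivWithinAt.liminf_right_slope_le hr) le_rfl
    (fun s _ => by simpa using hle s) t ⟨ht, le_rfl⟩
  rwa [gronwallBound_ε0, sub_zero] at h

theorem SolvesDampedOsc.sub {m b k : ℝ} {g h X Y : ℝ → ℝ} (hX : SolvesDampedOsc m b k g X)
    (hY : SolvesDampedOsc m b k h Y) :
    SolvesDampedOsc m b k (fun t => g t - h t) (fun t => X t - Y t) := by
  obtain ⟨hX1, hX2, hXeq⟩ := hX
  obtain ⟨hY1, hY2, hYeq⟩ := hY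
  have hd : deriv (fun t => X t - Y t) = fun t => deriv X t - deriv Y t :=
    funext fun t => deriv_fun_sub (hX1 t) (hY1 t)
  refine ⟨hX1.sub hY1, hd ▸ hX2.sub hY2, fun t => ?_⟩
  rw [hd, deriv_fun_sub (hX2 t) (hY2 t)]
  linear_combination hXeq t - hYeq t

theorem solvesDampedOsc_const (m b k c : ℝ) :
    SolvesDampedOsc m b k (fun _ => k * c) (fun _ => c) :=
  ⟨differentiable_const c, by simp, by simp⟩

theorem SolvesDampedOsc.tendsto_atTop_zero {m b k : ℝ} {Y : ℝ → ℝ} (hm : 0 < m) (hb : 0 < b)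
    (hk : 0 < k) (hY : SolvesDampedOsc m b k 0 Y) : Tendsto Y atTop (𝓝 0) := by
  obtain ⟨hY1, hY2, hYeq⟩ := hY
  set v := deriv Y
  set ε := min (b / (2 * m)) (k / (2 * b))
  have hε : 0 < ε := lt_min (by positivity) (by positivity)
  have hεm : 2 * m * ε ≤ b := by
    have h := min_le_left (b / (2 * m)) (k / (2 * b))
    rw [le_div_iff₀ (by positivity)] at h
    linarith
  have hεb : 2 * b * ε ≤ k := by
    have h := min_le_right (b / (2 * m)) (k / (2 * b))
    rw [le_div_iff₀ (by positivity)] at h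
    linarith
  set μ := k - ε * (b - m * ε)
  have hμ : k / 2 ≤ μ := by
    have : 0 ≤ m * ε ^ 2 := by positivity
    simp only [μ]
    nlinarith
  -- `μ` is chosen so that the cross terms `Y * v` cancel in the derivative of `V`
  set V : ℝ → ℝ := fun t => m * (v t + ε * Y t) ^ 2 + μ * Y t ^ 2
  have hV : ∀ t, HasDerivAt V
      (2 * m * (v t + ε * Y t) * (deriv v t + ε * v t) + 2 * μ * Y t * v t) t := by
    intro t
    have hYt : HasDerivAt Y (v t) t := (hY1 t).hasDerivAt
    have hvt := (hY2 t).hasDerivAt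
    exact ((((hvt.fun_add (hYt.const_mul ε)).fun_pow 2).const_mul m).fun_add
      ((hYt.fun_pow 2).const_mul μ)).congr_deriv (by push_cast; ring)
  have hV' : ∀ t, 2 * m * (v t + ε * Y t) * (deriv v t + ε * v t) + 2 * μ * Y t * v t
      ≤ -(2 * ε) * V t := by
    intro t
    have hode : m * deriv v t + b * v t + k * Y t = 0 := hYeq t
    have hdiss : 0 ≤ (b - 2 * m * ε) * (v t + ε * Y t) ^ 2 :=
      mul_nonneg (by linarith) (sq_nonneg _)
    linear_combination (2 * (v t + ε * Y t)) * hode + 2 * hdiss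
  have hbound : ∀ t, 0 ≤ t → |Y t| ≤ √(2 / k * V 0 * exp (-(2 * ε) * t)) := by
    intro t ht
    apply abs_le_sqrt
    have hVt := le_mul_exp_of_hasDerivAt_le_mul hV hV' ht
    have hμY : μ * Y t ^ 2 ≤ V t := le_add_of_nonneg_left (by positivity)
    calc Y t ^ 2 ≤ 2 / k * (μ * Y t ^ 2) := by
          rw [div_mul_eq_mul_div, le_div_iff₀ hk]
          nlinarith [sq_nonneg (Y t)]
      _ ≤ 2 / k * V 0 * exp (-(2 * ε) * t) := by
          rw [mul_assoc]
          exact mul_le_mul_of_nonneg_left (hμY.trans hVt) (by positivity)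
  have hmajorant : Tendsto (fun t => √(2 / k * V 0 * exp (-(2 * ε) * t))) atTop (𝓝 0) := by
    have h := ((tendsto_exp_atBot.comp
      (tendsto_id.const_mul_atTop_of_neg (by linarith : -(2 * ε) < 0))).const_mul
        (2 / k * V 0)).sqrt
    simpa [Function.comp_def] using h
  exact squeeze_zero_norm' (eventually_atTop.2 ⟨0, hbound⟩) hmajorant

theorem solvesDampedOsc_tsum {m b k : ℝ} {g g' g'' h : ℕ → ℝ → ℝ} {u : ℕ → ℝ}
    (hu : Summable u) (hg : ∀ j t, HasDerivAt (g j) (g' j t) t)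
    (hg' : ∀ j t, HasDerivAt (g' j) (g'' j t) t)
    (hode : ∀ j t, m * g'' j t + b * g' j t + k * g j t = h j t)
    (hg_le : ∀ j t, ‖g j t‖ ≤ u j) (hg'_le : ∀ j t, ‖g' j t‖ ≤ u j)
    (hg''_le : ∀ j t, ‖g'' j t‖ ≤ u j) :
    SolvesDampedOsc m b k (fun t => ∑' j, h j t) (fun t => ∑' j, g j t) := by
  have hsum : ∀ t, Summable fun j => g j t := fun t => .of_norm_bounded hu (hg_le · t)
  have hsum' : ∀ t, Summable fun j => g' j t := fun t => .of_norm_bounded hu (hg'_le · t)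
  have hsum'' : ∀ t, Summable fun j => g'' j t := fun t => .of_norm_bounded hu (hg''_le · t)
  have hd : deriv (fun t => ∑' j, g j t) = fun t => ∑' j, g' j t :=
    funext fun t => (hasDerivAt_tsum hu hg hg'_le (hsum 0) t).deriv
  have hd' : ∀ t, HasDerivAt (fun t => ∑' j, g' j t) (∑' j, g'' j t) t :=
    hasDerivAt_tsum hu hg' hg''_le (hsum' 0)
  refine ⟨fun t => (hasDerivAt_tsum hu hg hg'_le (hsum 0) t).differentiableAt,
    hd ▸ fun t => (hd' t).differentiableAt, fun t => ?_⟩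
  rw [hd, (hd' t).deriv, ← tsum_mul_left, ← tsum_mul_left, ← tsum_mul_left,
    ← Summable.tsum_add ((hsum'' t).mul_left m) ((hsum' t).mul_left b),
    ← Summable.tsum_add (((hsum'' t).mul_left m).add ((hsum' t).mul_left b))
      ((hsum t).mul_left k)]
  exact tsum_congr (hode · t)

/-- `|m (iω)² + b (iω) + K|²`, the squared modulus of the characteristic polynomial at `iω`. -/
def charPolyNormSq (m b K ω : ℝ) : ℝ := (K - m * ω ^ 2) ^ 2 + b ^ 2 * ω ^ 2

/-- `Re (exp (i (ω t + φ)) / p(iω))` for the characteristic polynomial `p`: the periodic solution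
of `m ẍ + b ẋ + K x = cos (ω t + φ)`. -/
noncomputable def cosResponse (m b K ω φ t : ℝ) : ℝ :=
  ((K - m * ω ^ 2) * cos (ω * t + φ) + b * ω * sin (ω * t + φ)) / charPolyNormSq m b K ω

section Bounds

variable {m b K : ℝ}

theorem exists_pos_le_charPolyNormSq (hm : 0 < m) (hb : b ≠ 0) (hK : 0 < K) :
    ∃ δ > 0, ∀ ω, δ ≤ charPolyNormSq m b K ω := by
  refine ⟨min (K ^ 2 / 4) (b ^ 2 * K / (2 * m)), lt_min (by positivity) (by positivity),
    fun ω => ?_⟩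
  unfold charPolyNormSq
  rcases le_or_gt (m * ω ^ 2) (K / 2) with h | h
  · have : K ^ 2 / 4 ≤ (K - m * ω ^ 2) ^ 2 := by nlinarith
    nlinarith [min_le_left (K ^ 2 / 4) (b ^ 2 * K / (2 * m)), sq_nonneg b, sq_nonneg ω]
  · have : b ^ 2 * K / (2 * m) ≤ b ^ 2 * ω ^ 2 := by
      rw [div_le_iff₀ (by positivity)]
      nlinarith [sq_nonneg b]
    nlinarith [min_le_right (K ^ 2 / 4) (b ^ 2 * K / (2 * m)), sq_nonneg (K - m * ω ^ 2)]

theorem exists_one_add_sq_sq_le_charPolyNormSq (hm : 0 < m) (hb : b ≠ 0) (hK : 0 < K) :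
    ∃ C, ∀ ω, (1 + ω ^ 2) ^ 2 ≤ C * charPolyNormSq m b K ω := by
  obtain ⟨δ, hδ, hδle⟩ := exists_pos_le_charPolyNormSq hm hb hK
  refine ⟨(2 * (m + K) ^ 2 / δ + 2) / m ^ 2, fun ω => ?_⟩
  have hD := hδle ω
  set D := charPolyNormSq m b K ω
  have hPD : (K - m * ω ^ 2) ^ 2 ≤ D := le_add_of_nonneg_right (by positivity)
  -- `m ω² = K - (K - m ω²)`
  have hlin : m * (1 + ω ^ 2) ≤ m + K + |K - m * ω ^ 2| := by
    linarith [neg_abs_le (K - m * ω ^ 2)]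
  have hconst : 2 * (m + K) ^ 2 ≤ 2 * (m + K) ^ 2 / δ * D := by
    rw [div_mul_eq_mul_div, le_div_iff₀ hδ]
    exact mul_le_mul_of_nonneg_left hD (by positivity)
  rw [div_mul_eq_mul_div, le_div_iff₀ (by positivity)]
  calc (1 + ω ^ 2) ^ 2 * m ^ 2 = (m * (1 + ω ^ 2)) ^ 2 := by ring
    _ ≤ (m + K + |K - m * ω ^ 2|) ^ 2 := pow_le_pow_left₀ (by positivity) hlin 2
    _ ≤ 2 * (m + K) ^ 2 + 2 * (K - m * ω ^ 2) ^ 2 := by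
        nlinarith [sq_abs (K - m * ω ^ 2), sq_nonneg (m + K - |K - m * ω ^ 2|)]
    _ ≤ (2 * (m + K) ^ 2 / δ + 2) * D := by nlinarith

theorem sq_mul_cos_add_mul_sin_le (a c x : ℝ) :
    (a * cos x + c * sin x) ^ 2 ≤ a ^ 2 + c ^ 2 := by
  nlinarith [sin_sq_add_cos_sq x, sq_nonneg (a * sin x - c * cos x)]

theorem exists_one_add_sq_mul_abs_cosResponse_le (hm : 0 < m) (hb : b ≠ 0) (hK : 0 < K) :
    ∃ M, ∀ ω φ t, (1 + ω ^ 2) * |cosResponse m b K ω φ t| ≤ M := by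
  obtain ⟨δ, hδ, hδle⟩ := exists_pos_le_charPolyNormSq hm hb hK
  obtain ⟨C, hC⟩ := exists_one_add_sq_sq_le_charPolyNormSq hm hb hK
  refine ⟨√C, fun ω φ t => ?_⟩
  have hD : 0 < charPolyNormSq m b K ω := hδ.trans_le (hδle ω)
  have hS := sq_mul_cos_add_mul_sin_le (K - m * ω ^ 2) (b * ω) (ω * t + φ)
  rw [← abs_of_nonneg (by positivity : (0 : ℝ) ≤ 1 + ω ^ 2), ← abs_mul]
  apply abs_le_sqrt
  rw [cosResponse, mul_div_assoc', div_pow, div_le_iff₀ (by positivity), mul_pow]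
  calc (1 + ω ^ 2) ^ 2 * ((K - m * ω ^ 2) * cos (ω * t + φ) + b * ω * sin (ω * t + φ)) ^ 2
      ≤ (C * charPolyNormSq m b K ω) * charPolyNormSq m b K ω :=
        mul_le_mul (hC ω) (by rw [charPolyNormSq]; linarith) (sq_nonneg _)
          ((hC ω).trans' (by positivity))
    _ = C * charPolyNormSq m b K ω ^ 2 := by ring

end Bounds

section Derivatives

variable {m b K ω φ : ℝ}

theorem hasDerivAt_cosResponse (t : ℝ) :
    HasDerivAt (cosResponse m b K ω φ) (ω * cosResponse m b K ω (φ + π / 2) t) t := by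
  have hθ : HasDerivAt (fun t => ω * t + φ) ω t :=
    (((hasDerivAt_id t).const_mul ω).add_const φ).congr_deriv (mul_one ω)
  refine (((hθ.cos.const_mul _).fun_add (hθ.sin.const_mul _)).div_const _).congr_deriv ?_
  simp only [cosResponse, ← add_assoc, cos_add_pi_div_two, sin_add_pi_div_two]
  ring

theorem cosResponse_add_pi (t : ℝ) :
    cosResponse m b K ω (φ + π) t = -cosResponse m b K ω φ t := by
  simp only [cosResponse, ← add_assoc, cos_add_pi, sin_add_pi]
  ring

theorem hasDerivAt_cosResponse_add_pi_div_two (t : ℝ) :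
    HasDerivAt (cosResponse m b K ω (φ + π / 2)) (-(ω * cosResponse m b K ω φ t)) t :=
  (hasDerivAt_cosResponse t).congr_deriv (by rw [add_assoc, add_halves, cosResponse_add_pi]; ring)

theorem cosResponse_ode (hD : charPolyNormSq m b K ω ≠ 0) (t : ℝ) :
    m * (ω * -(ω * cosResponse m b K ω φ t)) + b * (ω * cosResponse m b K ω (φ + π / 2) t)
      + K * cosResponse m b K ω φ t = cos (ω * t + φ) := by
  simp only [cosResponse, ← add_assoc, cos_add_pi_div_two, sin_add_pi_div_two]
  field_simp
  unfold charPolyNormSq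
  ring

end Derivatives

theorem abs_le_one_add_sq (x : ℝ) : |x| ≤ 1 + x ^ 2 := by
  nlinarith [sq_abs x, sq_nonneg (|x| - 1), abs_nonneg x]

theorem solvesDampedOsc_tsum_mul_cosResponse {m b K : ℝ} (hm : 0 < m) (hb : b ≠ 0) (hK : 0 < K)
    {a ω φ : ℕ → ℝ} (ha : Summable fun j => |a j|) :
    SolvesDampedOsc m b K (fun t => ∑' j, a j * cos (ω j * t + φ j))
      (fun t => ∑' j, a j * cosResponse m b K (ω j) (φ j) t) := by
  obtain ⟨δ, hδ, hδle⟩ := exists_pos_le_charPolyNormSq hm hb hK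
  obtain ⟨M, hM⟩ := exists_one_add_sq_mul_abs_cosResponse_le hm hb hK
  have hr : ∀ ω φ t, |cosResponse m b K ω φ t| ≤ M := fun ω φ t =>
    (le_mul_of_one_le_left (abs_nonneg _) (le_add_of_nonneg_right (sq_nonneg ω))).trans
      (hM ω φ t)
  have hr' : ∀ ω φ t, |ω * cosResponse m b K ω φ t| ≤ M := fun ω φ t => by
    rw [abs_mul]
    exact (mul_le_mul_of_nonneg_right (abs_le_one_add_sq ω) (abs_nonneg _)).trans (hM ω φ t)
  have hr'' : ∀ ω φ t, |ω * -(ω * cosResponse m b K ω φ t)| ≤ M := fun ω φ t => by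
    rw [abs_mul, abs_neg, abs_mul, ← mul_assoc, ← abs_mul, ← sq, abs_sq]
    exact (mul_le_mul_of_nonneg_right (by linarith) (abs_nonneg _)).trans (hM ω φ t)
  have hbound : ∀ {x : ℝ} (j : ℕ), |x| ≤ M → ‖a j * x‖ ≤ |a j| * M := fun j hx => by
    rw [norm_mul, Real.norm_eq_abs, Real.norm_eq_abs]
    exact mul_le_mul_of_nonneg_left hx (abs_nonneg _)
  exact solvesDampedOsc_tsum (ha.mul_right M)
    (fun j t => (hasDerivAt_cosResponse t).const_mul (a j))
    (fun j t => ((hasDerivAt_cosResponse_add_pi_div_two t).const_mul (ω j)).const_mul (a j))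
    (fun j t => by
      linear_combination a j * cosResponse_ode (φ := φ j) (hδ.trans_le (hδle (ω j))).ne' t)
    (fun j t => hbound j (hr ..)) (fun j t => hbound j (hr' ..)) (fun j t => hbound j (hr'' ..))

/-- The first mass of the two-mass mass–spring chain, under a quasi-periodic intervention
`do(X₂ = ζ₂)` on the second mass, converges (independently of initial conditions) to the
quasi-periodic trajectory given by the structural equation `F₁` of the derived Dynamic SCM. -/
theorem mass_spring_quasiperiodic_intervention_asymptotics
    (m1 b1 : ℝ) (hm1 : 0 < m1) (hb1 : 0 < b1)
    (k0 k1 : ℝ) (hk0 : 0 < k0) (hk1 : 0 < k1)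
    (l0 l1 : ℝ)
    (A ω φ : ℕ → ℝ) (hA : Summable (fun j => |A j|))
    (ζ2 : ℝ → ℝ) (hζ2 : ζ2 = fun t => ∑' j, A j * Real.cos (ω j * t + φ j))
    (X : ℝ → ℝ)
    (hX1 : Differentiable ℝ X) (hX2 : Differentiable ℝ (deriv X))
    (hode : ∀ t : ℝ, m1 * deriv (deriv X) t + b1 * deriv X t + (k0 + k1) * X t
      = k1 * ζ2 t + k0 * l0 - k1 * l1)
    (D : ℕ → ℝ)
    (hD : D = fun j => (k0 + k1 - m1 * (ω j) ^ 2) ^ 2 + b1 ^ 2 * (ω j) ^ 2) :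
    Tendsto (fun t => X t - (k0 * l0 - k1 * l1) / (k0 + k1) -
        ∑' j, (k1 * A j / D j) *
          ((k0 + k1 - m1 * (ω j) ^ 2) * Real.cos (ω j * t + φ j)
            + b1 * (ω j) * Real.sin (ω j * t + φ j)))
      atTop (nhds 0) := by
  subst hζ2 hD
  beta_reduce at hode
  have hK : 0 < k0 + k1 := add_pos hk0 hk1
  set c := (k0 * l0 - k1 * l1) / (k0 + k1)
  have hX : SolvesDampedOsc m1 b1 (k0 + k1) _ X := ⟨hX1, hX2, hode⟩
  have hkA : Summable fun j => |k1 * A j| := by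
    simpa only [abs_mul, abs_of_pos hk1] using hA.mul_left k1
  have hY := (hX.sub (solvesDampedOsc_const m1 b1 (k0 + k1) c)).sub
    (solvesDampedOsc_tsum_mul_cosResponse hm1 hb1.ne' hK (ω := ω) (φ := φ) hkA)
  have hforcing : (fun t => k1 * (∑' j, A j * cos (ω j * t + φ j)) + k0 * l0 - k1 * l1
      - (k0 + k1) * c - ∑' j, k1 * A j * cos (ω j * t + φ j)) = 0 := by
    have hc : (k0 + k1) * c = k0 * l0 - k1 * l1 := mul_div_cancel₀ _ hK.ne'
    funext t
    simp only [mul_assoc k1, tsum_mul_left, hc, Pi.zero_apply]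
    ring
  rw [hforcing] at hY
  refine (hY.tendsto_atTop_zero hm1 hb1 hK).congr fun t => ?_
  congr 1
  exact tsum_congr fun j => by rw [cosResponse, charPolyNormSq]; ring
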